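/- arXiv:2208.08414 — 9 statements merged into one kernel-verified Lean document; each statement's English description precedes it below -/
import Mathlib

section
/- For all integers r, n with 1 ≤ r < n, every r×n Latin rectangle can be extended, by adjoining n−r further rows, to a Latin square of order n. -/
/-!
The columns of an `r × n` Latin rectangle each miss `n - r` symbols, and each symbol is missing
from exactly `n - r` columns, since it occurs once in every row and never twice in a column.
The bipartite "column misses symbol" graph is therefore `(n - r)`-regular, so by double counting
it satisfies Hall's condition; a matching of the columns into it is a new row. Adding rows one
at a time yields a Latin square.
-/

open Finset Function Fintype

theorem Finset.exists_injective_mem_of_le_card_of_card_filter_le {ι α : Type*} [Fintype ι]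
    [DecidableEq α] (t : ι → Finset α) {d : ℕ} (hd : 0 < d) (ht : ∀ i, d ≤ #(t i))
    (hdeg : ∀ a, #{i | a ∈ t i} ≤ d) :
    ∃ f : ι → α, Injective f ∧ ∀ i, f i ∈ t i := by
  refine (all_card_le_biUnion_card_iff_exists_injective t).mp fun s ↦ ?_
  have hedges : #s * d ≤ #(s.biUnion t) * d :=
    card_mul_le_card_mul (fun i a ↦ a ∈ t i)
      (fun i hi ↦ (ht i).trans <| card_le_card fun a ha ↦
        mem_filter.2 ⟨mem_biUnion.2 ⟨i, hi, ha⟩, ha⟩)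
      (fun a _ ↦ (card_le_card <| filter_subset_filter _ s.subset_univ).trans (hdeg a))
  exact Nat.le_of_mul_le_mul_right hedges hd

def IsLatinRectangle {ρ κ σ : Type*} (A : ρ → κ → σ) : Prop :=
  (∀ i, Bijective (A i)) ∧ ∀ j, Injective fun i ↦ A i j

namespace IsLatinRectangle

theorem snoc {κ σ : Type*} {r : ℕ} {A : Fin r → κ → σ} (hA : IsLatinRectangle A)
    {f : κ → σ} (hf : Bijective f) (hfA : ∀ i j, f j ≠ A i j) :
    IsLatinRectangle (Fin.snoc A f : Fin (r + 1) → κ → σ) := by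
  refine ⟨Fin.lastCases (by simpa using hf) fun i ↦ by simpa using hA.1 i, fun j i i' h ↦ ?_⟩
  induction i using Fin.lastCases <;> induction i' using Fin.lastCases <;>
    simp only [Fin.snoc_castSucc, Fin.snoc_last] at h
  case last.last => rfl
  case last.cast i' => exact absurd h (hfA i' j)
  case cast.last i => exact absurd h.symm (hfA i j)
  case cast.cast i i' => rw [hA.2 j h]

variable {ρ α : Type*} [Fintype ρ] [Fintype α] [DecidableEq α] {A : ρ → α → α}

def missingSymbols (A : ρ → α → α) (j : α) : Finset α :=
  (univ.image fun i ↦ A i j)ᶜ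

theorem mem_missingSymbols {j s : α} : s ∈ missingSymbols A j ↔ ∀ i, A i j ≠ s := by
  simp [missingSymbols]

theorem card_missingSymbols (hA : IsLatinRectangle A) (j : α) :
    #(missingSymbols A j) = card α - card ρ := by
  rw [missingSymbols, card_compl, card_image_of_injective _ (hA.2 j), card_univ]

theorem card_le_card_filter_exists_eq (hA : IsLatinRectangle A) (s : α) :
    card ρ ≤ #{j | ∃ i, A i j = s} := by
  choose col hcol using fun i ↦ (hA.1 i).2 s
  refine card_le_card_of_injOn col (fun i _ ↦ mem_filter.2 ⟨mem_univ _, i, hcol i⟩)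
    fun i _ i' _ h ↦ hA.2 (col i) <| (hcol i).trans (h ▸ hcol i').symm

theorem card_filter_mem_missingSymbols_le (hA : IsLatinRectangle A) (s : α) :
    #{j | s ∈ missingSymbols A j} ≤ card α - card ρ := by
  have hsplit := card_filter_add_card_filter_not (s := univ) fun j ↦ ∃ i, A i j = s
  have hocc := hA.card_le_card_filter_exists_eq s
  simp only [mem_missingSymbols, ne_eq, ← not_exists, card_univ] at hsplit ⊢
  grind

theorem exists_bijective_forall_ne (hA : IsLatinRectangle A) (h : card ρ < card α) :
    ∃ f : α → α, Bijective f ∧ ∀ i j, f j ≠ A i j := by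
  obtain ⟨f, hf, hfA⟩ := exists_injective_mem_of_le_card_of_card_filter_le (missingSymbols A)
    (Nat.sub_pos_of_lt h) (fun j ↦ (hA.card_missingSymbols j).ge)
    hA.card_filter_mem_missingSymbols_le
  exact ⟨f, Finite.injective_iff_bijective.mp hf, fun i j ↦ (mem_missingSymbols.1 (hfA j) i).symm⟩

theorem exists_extension {n r : ℕ} (hn : card α = n) (hr : r ≤ n) {A : Fin r → α → α}
    (hA : IsLatinRectangle A) :
    ∃ L : Fin n → α → α, IsLatinRectangle L ∧ ∀ i, L (Fin.castLE hr i) = A i := by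
  induction hk : n - r generalizing r with
  | zero =>
    obtain rfl : r = n := by omega
    exact ⟨A, hA, fun i ↦ rfl⟩
  | succ k ih =>
    obtain ⟨f, hf, hfA⟩ := hA.exists_bijective_forall_ne (by simp only [Fintype.card_fin]; omega)
    obtain ⟨L, hL, hLA⟩ := ih (by omega) (hA.snoc hf hfA) (by omega)
    exact ⟨L, hL, fun i ↦ by simpa using hLA i.castSucc⟩

end IsLatinRectangle

theorem latin_rectangle_extends_to_latin_square_general
    (r n : ℕ) (h2 : r < n)
    (A : Fin r → Fin n → Fin n)
    (hrow : ∀ i : Fin r, Function.Injective (A i))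
    (hcol : ∀ j : Fin n, Function.Injective (fun i : Fin r => A i j)) :
    ∃ L : Fin n → Fin n → Fin n,
      (∀ i : Fin n, Function.Injective (L i)) ∧
      (∀ j : Fin n, Function.Injective (fun i : Fin n => L i j)) ∧
      (∀ (i : Fin r) (j : Fin n), L (Fin.castLE h2.le i) j = A i j) := by
  have hA : IsLatinRectangle A := ⟨fun i ↦ Finite.injective_iff_bijective.mp (hrow i), hcol⟩
  obtain ⟨L, hL, hLA⟩ := hA.exists_extension (Fintype.card_fin n) h2.le
  exact ⟨L, fun i ↦ (hL.1 i).injective, hL.2, fun i ↦ congrFun (hLA i)⟩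

/-- For all integers r, n with 1 ≤ r < n, every r×n Latin rectangle
can be extended, by adjoining n−r further rows, to a Latin square of order n.

An r×n Latin rectangle is represented by `A : Fin r → Fin n → Fin n` whose rows are
injective (each of the n symbols occurs exactly once in each row of length n) and whose
columns are injective (each symbol occurs at most once in each column).  A Latin square
of order n is `L : Fin n → Fin n → Fin n` with all rows and all columns injective. -/
theorem latin_rectangle_extends_to_latin_square
    (r n : ℕ) (h1 : 1 ≤ r) (h2 : r < n)
    (A : Fin r → Fin n → Fin n)
    (hrow : ∀ i : Fin r, Function.Injective (A i))
    (hcol : ∀ j : Fin n, Function.Injective (fun i : Fin r => A i j)) :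
    ∃ L : Fin n → Fin n → Fin n,
      (∀ i : Fin n, Function.Injective (L i)) ∧
      (∀ j : Fin n, Function.Injective (fun i : Fin n => L i j)) ∧
      (∀ (i : Fin r) (j : Fin n), L (Fin.castLE h2.le i) j = A i j) :=
  latin_rectangle_extends_to_latin_square_general r n h2 A hrow hcol
end

section
/- Let A be an r×n matrix of zeros and ones with 1 ≤ r < n, such that every row of A contains exactly k ones. For each i ∈ {1,…,n} let N(i) denote the number of ones in the i-th column of A. If k−(n−r) ≤ N(i) ≤ k for every i ∈ {1,…,n}, then n−r further rows of zeros and ones can be adjoined to A so as to obtain an n×n matrix of zeros and ones with exactly k ones in every row and exactly k ones in every column. -/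
open Finset

lemma select_smallest {α : Type*} [DecidableEq α] (f : α → ℤ) :
    ∀ (k : ℕ) (s : Finset α), k ≤ s.card →
    ∃ t, t ⊆ s ∧ t.card = k ∧ ∀ i ∈ t, ∀ j ∈ s, j ∉ t → f i ≤ f j := by
  intro k
  induction k with
  | zero => intro s _; exact ⟨∅, empty_subset s, rfl, by simp⟩
  | succ k ih =>
    intro s hk
    obtain ⟨t, hts, htc, hmin⟩ := ih s (by omega)
    have hne : (s \ t).Nonempty := by
      rw [← card_pos, card_sdiff_of_subset hts, htc]; omega
    obtain ⟨m, hm, hmmin⟩ := (s \ t).exists_min_image f hne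
    refine ⟨insert m t, insert_subset (mem_sdiff.mp hm).1 hts, ?_, ?_⟩
    · rw [card_insert_of_notMem (mem_sdiff.mp hm).2, htc]
    · intro i hi j hj hjt
      have hjst : j ∈ s \ t := mem_sdiff.mpr ⟨hj, fun h => hjt (mem_insert_of_mem h)⟩
      rcases mem_insert.mp hi with h | h
      · subst h; exact hmmin j hjst
      · exact hmin i h j hj fun h' => hjt (mem_insert_of_mem h')

lemma ryser_step (r n k : ℕ) (h1 : 1 ≤ r) (h2 : r < n)
    (A : Fin r → Fin n → Bool)
    (hrow : ∀ i : Fin r, (univ.filter (fun j : Fin n => A i j = true)).card = k)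
    (hcol : ∀ i : Fin n,
      (k : ℤ) - ((n : ℤ) - (r : ℤ)) ≤ ((univ.filter (fun a : Fin r => A a i = true)).card : ℤ) ∧
      (univ.filter (fun a : Fin r => A a i = true)).card ≤ k) :
    ∃ B : Fin (r+1) → Fin n → Bool,
      (∀ (a : Fin r) (i : Fin n), B a.castSucc i = A a i) ∧
      (∀ a : Fin (r+1), (univ.filter (fun j : Fin n => B a j = true)).card = k) ∧
      (∀ i : Fin n,
        (k : ℤ) - ((n : ℤ) - ((r:ℤ)+1)) ≤
          ((univ.filter (fun a : Fin (r+1) => B a i = true)).card : ℤ) ∧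
        (univ.filter (fun a : Fin (r+1) => B a i = true)).card ≤ k) := by
  classical
  set N : Fin n → ℕ := fun i => (univ.filter (fun a : Fin r => A a i = true)).card with hN
  have hkn : k ≤ n := by
    have h := hrow ⟨0, by omega⟩
    calc k = _ := h.symm
      _ ≤ (univ : Finset (Fin n)).card := card_filter_le _ _
      _ = n := by simp
  have hsum : ∑ j : Fin n, (N j : ℤ) = (r : ℤ) * k := by
    have e1 : ∀ j : Fin n, (N j : ℤ) = ∑ a : Fin r, (if A a j = true then (1:ℤ) else 0) := by
      intro j; rw [Finset.sum_boole]
    rw [Finset.sum_congr rfl fun j _ => e1 j, Finset.sum_comm]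
    have e2 : ∀ a : Fin r, (∑ j : Fin n, if A a j = true then (1:ℤ) else 0) = (k:ℤ) := by
      intro a; rw [Finset.sum_boole]; exact_mod_cast hrow a
    rw [Finset.sum_congr rfl fun a _ => e2 a, Finset.sum_const, card_univ, Fintype.card_fin,
      nsmul_eq_mul]
  obtain ⟨S, -, hScard, hSmin⟩ := select_smallest (fun i => (N i : ℤ)) k (univ : Finset (Fin n))
    (by simpa using hkn)
  have hSlt : ∀ i ∈ S, N i < k := by
    by_contra h
    push_neg at h
    obtain ⟨i₀, hi₀S, hi₀⟩ := h
    have hk1 : 1 ≤ k := by rw [← hScard]; exact card_pos.mpr ⟨i₀, hi₀S⟩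
    have hout : ∀ j ∈ Sᶜ, (k : ℤ) ≤ (N j : ℤ) := by
      intro j hj
      have hle := hSmin i₀ hi₀S j (mem_univ j) (mem_compl.mp hj)
      have hk' : (k : ℤ) ≤ (N i₀ : ℤ) := by exact_mod_cast hi₀
      linarith
    have hsplit : ∑ j ∈ S, (N j : ℤ) + ∑ j ∈ Sᶜ, (N j : ℤ) = ∑ j : Fin n, (N j : ℤ) :=
      Finset.sum_add_sum_compl S _
    have hS_lb : ((k:ℤ) - ((n:ℤ) - r)) * ((k:ℤ) - 1) + k ≤ ∑ j ∈ S, (N j : ℤ) := by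
      rw [← Finset.sum_erase_add S _ hi₀S]
      have hbd : ∀ j ∈ S.erase i₀, (k:ℤ) - ((n:ℤ) - r) ≤ (N j : ℤ) := fun j _ => (hcol j).1
      have hsa : ((k:ℤ) - ((n:ℤ) - r)) * ((k:ℤ) - 1) ≤ ∑ j ∈ S.erase i₀, (N j : ℤ) := by
        calc ((k:ℤ) - ((n:ℤ) - r)) * ((k:ℤ) - 1)
            = (S.erase i₀).card • ((k:ℤ) - ((n:ℤ) - r)) := by
              rw [card_erase_of_mem hi₀S, hScard, nsmul_eq_mul]
              push_cast [Nat.cast_sub hk1]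
              ring
          _ ≤ ∑ j ∈ S.erase i₀, (N j : ℤ) := Finset.card_nsmul_le_sum _ _ _ hbd
      have h3 : (k : ℤ) ≤ (N i₀ : ℤ) := by exact_mod_cast hi₀
      linarith
    have hSc_lb : ((n:ℤ) - k) * k ≤ ∑ j ∈ Sᶜ, (N j : ℤ) := by
      calc ((n:ℤ) - k) * k = Sᶜ.card • (k : ℤ) := by
            rw [card_compl, hScard, Fintype.card_fin, nsmul_eq_mul]
            push_cast [Nat.cast_sub hkn]
            ring
        _ ≤ ∑ j ∈ Sᶜ, (N j : ℤ) := Finset.card_nsmul_le_sum _ _ _ hout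
    rw [hsum] at hsplit
    have hrn : (r : ℤ) < n := by exact_mod_cast h2
    nlinarith [hsplit, hS_lb, hSc_lb]
  refine ⟨Fin.lastCases (fun i => decide (i ∈ S)) A, ?_, ?_, ?_⟩
  · intro a i; simp only [Fin.lastCases_castSucc]
  · intro a
    refine Fin.lastCases ?_ ?_ a
    · simp only [Fin.lastCases_last, decide_eq_true_eq]
      simpa using hScard
    · intro a'
      simp only [Fin.lastCases_castSucc]
      exact hrow a'
  · intro i
    have hcount : (univ.filter (fun a : Fin (r+1) =>
        (fun a : Fin (r+1) => Fin.lastCases (motive := fun _ => Fin n → Bool)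
          (fun i => decide (i ∈ S)) A a) a i = true)).card
        = N i + (if i ∈ S then 1 else 0) := by
      rw [Finset.card_filter, Fin.sum_univ_castSucc]
      simp only [Fin.lastCases_castSucc, Fin.lastCases_last, decide_eq_true_eq]
      rw [← Finset.card_filter]
    have hcolN := hcol i
    have hNdef : (univ.filter (fun a : Fin r => A a i = true)).card = N i := rfl
    rw [hNdef] at hcolN
    rw [hcount]
    by_cases hiS : i ∈ S
    · have hlt := hSlt i hiS
      simp only [hiS, if_pos]
      refine ⟨?_, by omega⟩
      push_cast
      linarith [hcolN.1]
    · have hub := hcolN.2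
      simp only [hiS, if_neg, not_false_iff]
      refine ⟨?_, by omega⟩
      by_contra hviol
      push_neg at hviol
      have hNi : (N i : ℤ) ≤ (k:ℤ) - (n:ℤ) + r := by push_cast at hviol ⊢; linarith
      set T : Finset (Fin n) := insert i S with hT
      have hTcard : T.card = k + 1 := by rw [hT, card_insert_of_notMem hiS, hScard]
      have hTub : ∀ j ∈ T, (N j : ℤ) ≤ (k:ℤ) - (n:ℤ) + r := by
        intro j hj
        rcases mem_insert.mp hj with h | h
        · subst h; exact hNi
        · have := hSmin j h i (mem_univ i) hiS
          linarith
      have hT_ub : ∑ j ∈ T, (N j : ℤ) ≤ ((k:ℤ) + 1) * ((k:ℤ) - (n:ℤ) + r) := by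
        calc ∑ j ∈ T, (N j : ℤ) ≤ T.card • ((k:ℤ) - (n:ℤ) + r) :=
              Finset.sum_le_card_nsmul _ _ _ hTub
          _ = ((k:ℤ) + 1) * ((k:ℤ) - (n:ℤ) + r) := by rw [hTcard, nsmul_eq_mul]; push_cast; ring
      have hk1n : k + 1 ≤ n := by
        have hc := card_le_card (subset_univ T)
        rw [hTcard] at hc
        simpa using hc
      have hTc_ub : ∑ j ∈ Tᶜ, (N j : ℤ) ≤ ((n:ℤ) - ((k:ℤ)+1)) * k := by
        have hcb : ∀ j ∈ Tᶜ, (N j : ℤ) ≤ (k:ℤ) := by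
          intro j _
          have := (hcol j).2
          exact_mod_cast this
        calc ∑ j ∈ Tᶜ, (N j : ℤ) ≤ Tᶜ.card • (k : ℤ) :=
              Finset.sum_le_card_nsmul _ _ _ hcb
          _ = ((n:ℤ) - ((k:ℤ)+1)) * k := by
              rw [card_compl, hTcard, Fintype.card_fin, nsmul_eq_mul]
              push_cast [Nat.cast_sub hk1n]
              ring
      have hsplit : ∑ j ∈ T, (N j : ℤ) + ∑ j ∈ Tᶜ, (N j : ℤ) = (r:ℤ) * k := by
        rw [Finset.sum_add_sum_compl, hsum]
      have hrn : (r : ℤ) < n := by exact_mod_cast h2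
      nlinarith [hsplit, hT_ub, hTc_ub]

lemma ryser_aux (d : ℕ) : ∀ (r n k : ℕ) (hn : n = r + d + 1) (h1 : 1 ≤ r)
    (A : Fin r → Fin n → Bool),
    (∀ i : Fin r, (univ.filter (fun j : Fin n => A i j = true)).card = k) →
    (∀ i : Fin n,
      (k : ℤ) - ((n : ℤ) - (r : ℤ)) ≤ ((univ.filter (fun a : Fin r => A a i = true)).card : ℤ) ∧
      (univ.filter (fun a : Fin r => A a i = true)).card ≤ k) →
    ∃ M : Fin n → Fin n → Bool,
      (∀ (a : Fin r) (i : Fin n), M ⟨a.val, by omega⟩ i = A a i) ∧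
      (∀ a : Fin n, (univ.filter (fun i : Fin n => M a i = true)).card = k) ∧
      (∀ i : Fin n, (univ.filter (fun a : Fin n => M a i = true)).card = k) := by
  induction d with
  | zero =>
    intro r n k hn h1 A hrow hcol
    rw [Nat.add_zero] at hn
    subst hn
    obtain ⟨B, hB1, hB2, hB3⟩ := ryser_step r (r + 1) k h1 (by omega) A hrow hcol
    refine ⟨B, ?_, hB2, ?_⟩
    · intro a i
      exact hB1 a i
    · intro i
      have h := hB3 i
      push_cast at h
      omega
  | succ d ih =>
    intro r n k hn h1 A hrow hcol
    obtain ⟨B, hB1, hB2, hB3⟩ := ryser_step r n k h1 (by omega) A hrow hcol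
    obtain ⟨M, hM1, hM2, hM3⟩ := ih (r+1) n k (by omega) (by omega) B hB2 (by
      intro i
      have h := hB3 i
      push_cast at h ⊢
      exact ⟨by linarith [h.1], h.2⟩)
    refine ⟨M, ?_, hM2, hM3⟩
    intro a i
    have := hM1 a.castSucc i
    rw [← hB1 a i]
    exact this




/-- Ryser's combinatorial theorem: Let A be an r×n (0,1)-matrix with
1 ≤ r < n such that every row contains exactly k ones, and let N(i) be the number of
ones in column i.  If k−(n−r) ≤ N(i) ≤ k for every column i, then n−r further rows of
zeros and ones can be adjoined to A to obtain an n×n (0,1)-matrix with exactly k ones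
in every row and in every column. -/
theorem ryser_combinatorial_theorem
    (r n k : ℕ) (h1 : 1 ≤ r) (h2 : r < n)
    (A : Fin r → Fin n → Bool)
    (hrow : ∀ i : Fin r, (Finset.univ.filter (fun j : Fin n => A i j = true)).card = k)
    (hcol : ∀ i : Fin n,
      (k : ℤ) - ((n : ℤ) - (r : ℤ)) ≤
        ((Finset.univ.filter (fun a : Fin r => A a i = true)).card : ℤ) ∧
      (Finset.univ.filter (fun a : Fin r => A a i = true)).card ≤ k) :
    ∃ M : Fin n → Fin n → Bool,
      (∀ (a : Fin r) (i : Fin n), M (Fin.castLE h2.le a) i = A a i) ∧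
      (∀ a : Fin n, (Finset.univ.filter (fun i : Fin n => M a i = true)).card = k) ∧
      (∀ i : Fin n, (Finset.univ.filter (fun a : Fin n => M a i = true)).card = k) := by
  obtain ⟨M, hM1, hM2, hM3⟩ := ryser_aux (n - r - 1) r n k (by omega) h1 A hrow hcol
  exact ⟨M, fun a i => hM1 a i, hM2, hM3⟩
end

section
/- Let p and q be positive integers, let c₁,…,c_p be integers with 0 ≤ c_j ≤ q for all j, let N = c₁ + c₂ + ⋯ + c_p, and let m and M be integers with 0 ≤ m, M ≤ p and mq ≤ N ≤ Mq. Then there exists a (0,1)-matrix with q rows and p columns such that for every j ∈ {1,…,p} the j-th column contains exactly c_j ones, and for every i ∈ {1,…,q} the i-th row contains at least m and at most M ones. -/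
/-! Enumerate the `N` ones column by column as the slots `0, 1, …, N - 1` and put slot `k` into
row `k % q`. A column fills at most `q` consecutive slots, hence distinct rows, so it gets exactly
`c j` ones. Row `i` receives the slots `k < N` with `k ≡ i [MOD q]`, one per column containing
such a slot; there are `⌊N / q⌋` or `⌈N / q⌉` of them, which lies between `m` and `M`. -/

open Finset Function

section Incidence

variable {ι κ : Type*} {β : ι → Type*} [DecidableEq κ] [∀ j, Fintype (β j)]

theorem card_filter_exists_mk_eq_of_injective [Fintype κ] (f : (Σ j, β j) → κ)
    (hf : ∀ j, Injective fun b => f ⟨j, b⟩) (j : ι) :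
    #{i | ∃ b, f ⟨j, b⟩ = i} = Fintype.card (β j) := by
  rw [← card_univ, ← card_image_of_injective _ (hf j)]
  congr 1
  ext i
  simp

theorem card_filter_exists_mk_eq_card_fiber [Fintype ι] [DecidableEq ι] (f : (Σ j, β j) → κ)
    (hf : ∀ j, Injective fun b => f ⟨j, b⟩) (i : κ) :
    #{j | ∃ b, f ⟨j, b⟩ = i} = #{s | f s = i} := by
  rw [← card_image_of_injOn (f := Sigma.fst)]
  · congr 1
    ext j
    simp
  · rintro ⟨j, b⟩ hb ⟨j', b'⟩ hb' (rfl : j = j')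
    simp only [coe_filter, mem_univ, true_and, Set.mem_ofPred_eq] at hb hb'
    rw [hf j (hb.trans hb'.symm)]

end Incidence

theorem Nat.add_mod_injective_of_le {a c q : ℕ} (h : c ≤ q) :
    Injective fun t : Fin c => (a + t) % q := fun t t' htt' =>
  Fin.ext <| (Nat.ModEq.add_left_cancel' a htt').eq_of_lt_of_lt (t.2.trans_le h) (t'.2.trans_le h)

theorem Fin.card_filter_val_modEq (N q v : ℕ) :
    #{k : Fin N | (k : ℕ) ≡ v [MOD q]} = N.count (· ≡ v [MOD q]) := by
  rw [Nat.count_eq_card_filter_range, ← Nat.Iio_eq_range, ← Fin.map_valEmbedding_univ, filter_map,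
    card_map]
  rfl

theorem Nat.le_count_modEq {m N q : ℕ} (v : ℕ) (hq : 0 < q) (h : m * q ≤ N) :
    m ≤ N.count (· ≡ v [MOD q]) := by
  rw [Nat.count_modEq_card _ hq]
  exact le_add_right_of_le ((Nat.le_div_iff_mul_le hq).2 h)

theorem Nat.count_modEq_le {M N q : ℕ} (v : ℕ) (hq : 0 < q) (h : N ≤ M * q) :
    N.count (· ≡ v [MOD q]) ≤ M := by
  rw [Nat.count_modEq_card _ hq]
  split_ifs with hv
  · have : N ≠ M * q := fun hN => by simp [hN] at hv
    exact Nat.div_lt_of_lt_mul (by rw [mul_comm]; omega)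
  · simpa using Nat.div_le_of_le_mul (by rwa [mul_comm])

theorem lemma_one_five_general
    (p q : ℕ) (hq : 0 < q)
    (c : Fin p → ℕ) (hc : ∀ j : Fin p, c j ≤ q)
    (m M : ℕ)
    (hlow : m * q ≤ ∑ j : Fin p, c j) (hhigh : ∑ j : Fin p, c j ≤ M * q) :
    ∃ T : Fin q → Fin p → Bool,
      (∀ j : Fin p, (Finset.univ.filter (fun i : Fin q => T i j = true)).card = c j) ∧
      (∀ i : Fin q,
        m ≤ (Finset.univ.filter (fun j : Fin p => T i j = true)).card ∧
        (Finset.univ.filter (fun j : Fin p => T i j = true)).card ≤ M) := by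
  let row : (Σ j, Fin (c j)) → Fin q := fun s => ⟨finSigmaFinEquiv s % q, Nat.mod_lt _ hq⟩
  have hrow : ∀ j, Injective fun t => row ⟨j, t⟩ := fun j t t' h =>
    Nat.add_mod_injective_of_le (hc j) (by simpa [row] using h)
  have hcount : ∀ i : Fin q,
      #{j | ∃ t, row ⟨j, t⟩ = i} = (∑ j, c j).count (· ≡ i [MOD q]) := fun i => by
    -- `convert` reconciles the two decidability instances of the existential
    convert (card_filter_exists_mk_eq_card_fiber row hrow i).trans ?_
    rw [← Fin.card_filter_val_modEq]
    refine card_equiv finSigmaFinEquiv fun s => ?_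
    simp [row, Fin.ext_iff, Nat.ModEq, Nat.mod_eq_of_lt i.2]
  refine ⟨fun i j => decide (∃ t, row ⟨j, t⟩ = i), fun j => ?_, fun i => ?_⟩
  · simpa using card_filter_exists_mk_eq_of_injective row hrow j
  · simp only [decide_eq_true_eq, hcount]
    exact ⟨Nat.le_count_modEq _ hq hlow, Nat.count_modEq_le _ hq hhigh⟩

/-- Lemma 1.5: Let p, q be positive integers, let c₁,…,c_p be integers
with 0 ≤ c_j ≤ q, let N = c₁ + ⋯ + c_p, and let m, M be integers with 0 ≤ m, M ≤ p and
mq ≤ N ≤ Mq.  Then there is a (0,1)-matrix with q rows and p columns whose j-th column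
contains exactly c_j ones and whose every row contains at least m and at most M ones. -/
theorem lemma_one_five
    (p q : ℕ) (hp : 0 < p) (hq : 0 < q)
    (c : Fin p → ℕ) (hc : ∀ j : Fin p, c j ≤ q)
    (m M : ℕ) (hm : m ≤ p) (hM : M ≤ p)
    (hlow : m * q ≤ ∑ j : Fin p, c j) (hhigh : ∑ j : Fin p, c j ≤ M * q) :
    ∃ T : Fin q → Fin p → Bool,
      (∀ j : Fin p, (Finset.univ.filter (fun i : Fin q => T i j = true)).card = c j) ∧
      (∀ i : Fin q,
        m ≤ (Finset.univ.filter (fun j : Fin p => T i j = true)).card ∧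
        (Finset.univ.filter (fun j : Fin p => T i j = true)).card ≤ M) :=
  lemma_one_five_general p q hq c hc m M hlow hhigh
end

section
/- Let n, r, s, k be positive integers with r, s, k ≤ n and r + s ≥ n. Let A be an r×s (0,1)-matrix in which every row contains at least s+k−n and at most k ones and every column contains at least r+k−n and at most k ones, and let a₀ be the total number of ones of A. If (r+s−n)k ≤ a₀ and a₀ ≤ rs − (n−k)(r+s−n), then there exists an (n−r)×s (0,1)-matrix B such that in the n×s matrix obtained by placing B below A, every column contains exactly k ones and every row contains at least s+k−n and at most k ones. -/
/-!
Let `c j` be the number of ones in column `j` of `A`; the column hypotheses say exactly that the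
deficits `d j = k - c j` satisfy `0 ≤ d j ≤ n - r`. Fill `B` cyclically: write the `d 0` ones of
column `0`, then the `d 1` ones of column `1`, and so on, at consecutive positions
`t = 0, 1, …, T - 1` with `T = ∑ d j`, and put position `t` in row `t % (n - r)`. As
`d j ≤ n - r`, the positions of one column land in distinct rows, so column `j` of `B` gets exactly
`d j` ones, and row `i` gets the number of `t < T` with `t ≡ i`, which is `⌊T / (n - r)⌋` or
`⌈T / (n - r)⌉`. Finally `T = s k - a₀`, and the two bounds on `a₀` say exactly that
`(s + k - n)(n - r) ≤ T ≤ k (n - r)`.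
-/

open Finset

lemma Finset.sum_range_sum_eq_sum_sum_Ico {M : Type*} [AddCommMonoid M] (f : ℕ → M)
    (d : ℕ → ℕ) (N : ℕ) :
    ∑ t ∈ range (∑ l ∈ range N, d l), f t =
      ∑ j ∈ range N, ∑ t ∈ Ico (∑ l ∈ range j, d l) (∑ l ∈ range (j + 1), d l), f t := by
  induction N with
  | zero => simp
  | succ N ih =>
    rw [sum_range_succ (fun j => ∑ t ∈ Ico _ _, f t), ← ih,
      sum_range_add_sum_Ico _ (sum_le_sum_of_subset (range_subset_range.2 N.le_succ))]

lemma Nat.le_count_modEq_of_mul_le {m T lo : ℕ} (hm : 0 < m) (h : lo * m ≤ T) (i : ℕ) :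
    lo ≤ T.count (· ≡ i [MOD m]) := by
  rw [Nat.count_modEq_card _ hm]
  exact ((Nat.le_div_iff_mul_le hm).2 h).trans (Nat.le_add_right _ _)

lemma Nat.count_modEq_le_of_le_mul {m T hi : ℕ} (hm : 0 < m) (h : T ≤ hi * m) (i : ℕ) :
    T.count (· ≡ i [MOD m]) ≤ hi := by
  rw [Nat.count_modEq_card _ hm]
  have hT : T / m * m + T % m ≤ hi * m := (Nat.div_add_mod' T m).trans_le h
  split_ifs with hrem
  · have := Nat.lt_of_mul_lt_mul_right (show T / m * m < hi * m by omega)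
    omega
  · simpa using Nat.le_of_mul_le_mul_right (show T / m * m ≤ hi * m by omega) hm

lemma Finset.card_filter_prod_eq_sum {α β : Type*} [Fintype α] [Fintype β] (p : α → β → Prop)
    [∀ a b, Decidable (p a b)] : #{q : α × β | p q.1 q.2} = ∑ b, #{a | p a b} := by
  simp only [card_filter, Fintype.sum_prod_type]
  exact sum_comm

section CyclicFill

variable (m : ℕ) (d : ℕ → ℕ)

def blockResidueCard (i j : ℕ) : ℕ :=
  #{t ∈ Ico (∑ l ∈ range j, d l) (∑ l ∈ range (j + 1), d l) | t % m = i}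

variable {m d}

lemma blockResidueCard_le_one {j : ℕ} (hd : d j ≤ m) (i : ℕ) : blockResidueCard m d i j ≤ 1 := by
  refine card_le_one.2 fun x hx y hy =>
    Nat.mod_injOn_Ico (∑ l ∈ range j, d l) m ?_ ?_
      ((mem_filter.1 hx).2.trans (mem_filter.1 hy).2.symm)
  all_goals simp only [mem_coe, mem_filter, mem_Ico, sum_range_succ] at *; omega

lemma sum_blockResidueCard_row (N : ℕ) {i : ℕ} (hi : i < m) :
    ∑ j ∈ range N, blockResidueCard m d i j = (∑ l ∈ range N, d l).count (· ≡ i [MOD m]) := by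
  simp only [blockResidueCard, card_filter, Nat.count_eq_card_filter_range, Nat.ModEq,
    Nat.mod_eq_of_lt hi]
  exact (sum_range_sum_eq_sum_sum_Ico _ d N).symm

lemma sum_blockResidueCard_col {j : ℕ} (hd : d j ≤ m) :
    ∑ i ∈ range m, blockResidueCard m d i j = d j := by
  simp only [blockResidueCard]
  rw [← card_eq_sum_card_fiberwise, Nat.card_Ico, sum_range_succ,
    Nat.add_sub_cancel_left]
  intro t ht
  simp only [coe_Ico, Set.mem_Ico, sum_range_succ] at ht
  exact mem_range.2 (Nat.mod_lt _ (by omega))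

end CyclicFill

theorem exists_bool_matrix_col_card_eq_row_card_bounds {m s : ℕ} (d : Fin s → ℕ)
    (hd : ∀ j, d j ≤ m) {lo hi : ℕ} (hlo : lo * m ≤ ∑ j, d j) (hhi : ∑ j, d j ≤ hi * m) :
    ∃ B : Fin m → Fin s → Bool,
      (∀ j, #{i | B i j} = d j) ∧ ∀ i, lo ≤ #{j | B i j} ∧ #{j | B i j} ≤ hi := by
  set D : ℕ → ℕ := fun t => if h : t < s then d ⟨t, h⟩ else 0
  have hD : ∀ j : Fin s, D j = d j := fun j => dif_pos j.isLt
  have hsum : ∑ l ∈ range s, D l = ∑ j, d j := by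
    simp only [← Fin.sum_univ_eq_sum_range, hD]
  have hindicator : ∀ (i : Fin m) (j : Fin s),
      (if 0 < blockResidueCard m D i j then 1 else 0) = blockResidueCard m D i j := by
    intro i j
    have := blockResidueCard_le_one ((hD j).trans_le (hd j)) i
    split_ifs <;> omega
  refine ⟨fun i j => decide (0 < blockResidueCard m D i j), fun j => ?_, fun i => ?_⟩
  · simp only [card_filter, decide_eq_true_eq, hindicator]
    rw [Fin.sum_univ_eq_sum_range (fun i => blockResidueCard m D i j),
      sum_blockResidueCard_col ((hD j).trans_le (hd j)), hD]
  · simp only [card_filter, decide_eq_true_eq, hindicator]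
    rw [Fin.sum_univ_eq_sum_range (blockResidueCard m D i), sum_blockResidueCard_row s i.isLt,
      hsum]
    exact ⟨Nat.le_count_modEq_of_mul_le i.pos hlo i, Nat.count_modEq_le_of_le_mul i.pos hhi i⟩

theorem theorem_one_six_general
    (n r s k : ℕ)
    (hr : r ≤ n)
    (A : Fin r → Fin s → Bool)
    (hcol : ∀ j : Fin s,
      (r : ℤ) + (k : ℤ) - (n : ℤ) ≤
        ((Finset.univ.filter (fun i : Fin r => A i j = true)).card : ℤ) ∧
      (Finset.univ.filter (fun i : Fin r => A i j = true)).card ≤ k)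
    (hlow : ((r : ℤ) + (s : ℤ) - (n : ℤ)) * (k : ℤ) ≤
      ((Finset.univ.filter (fun q : Fin r × Fin s => A q.1 q.2 = true)).card : ℤ))
    (hhigh : ((Finset.univ.filter (fun q : Fin r × Fin s => A q.1 q.2 = true)).card : ℤ) ≤
      (r : ℤ) * (s : ℤ) - ((n : ℤ) - (k : ℤ)) * ((r : ℤ) + (s : ℤ) - (n : ℤ))) :
    ∃ B : Fin (n - r) → Fin s → Bool,
      (∀ j : Fin s,
        (Finset.univ.filter (fun i : Fin r => A i j = true)).card +
          (Finset.univ.filter (fun i : Fin (n - r) => B i j = true)).card = k) ∧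
      (∀ i : Fin (n - r),
        (s : ℤ) + (k : ℤ) - (n : ℤ) ≤
          ((Finset.univ.filter (fun j : Fin s => B i j = true)).card : ℤ) ∧
        (Finset.univ.filter (fun j : Fin s => B i j = true)).card ≤ k) := by
  have hdeficit : ∀ j, k - #{i | A i j = true} ≤ n - r := fun j => by
    have := (hcol j).1; omega
  have htotal : ((∑ j, (k - #{i | A i j = true}) : ℕ) : ℤ) =
      s * k - #{q : Fin r × Fin s | A q.1 q.2 = true} := by
    rw [card_filter_prod_eq_sum (fun i j => A i j = true)]
    push_cast [Nat.cast_sub (hcol _).2]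
    simp [sum_sub_distrib]
  have hhi : ∑ j, (k - #{i | A i j = true}) ≤ k * (n - r) := by
    rw [← Nat.cast_le (α := ℤ), htotal, Nat.cast_mul, Nat.cast_sub hr]
    linarith
  have hlo : (k + s - n) * (n - r) ≤ ∑ j, (k - #{i | A i j = true}) := by
    rcases le_or_gt n (k + s) with hks | hks
    · rw [← Nat.cast_le (α := ℤ), htotal, Nat.cast_mul, Nat.cast_sub hr, Nat.cast_sub hks]
      push_cast
      linarith
    · simp [Nat.sub_eq_zero_of_le hks.le]
  obtain ⟨B, hBcol, hBrow⟩ :=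
    exists_bool_matrix_col_card_eq_row_card_bounds _ hdeficit hlo hhi
  refine ⟨B, fun j => ?_, fun i => ⟨?_, (hBrow i).2⟩⟩
  · rw [hBcol]
    have := (hcol j).2
    omega
  · have := (hBrow i).1
    omega

/-- Theorem 1.6: Let n, r, s, k be positive integers with r, s, k ≤ n and
r + s ≥ n.  Let A be an r×s (0,1)-matrix in which every row contains at least s+k−n and
at most k ones and every column contains at least r+k−n and at most k ones, with a₀ ones
in total.  If (r+s−n)k ≤ a₀ ≤ rs − (n−k)(r+s−n), then there is an (n−r)×s (0,1)-matrix
B such that, stacking B below A, every column of the resulting n×s matrix contains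
exactly k ones and every row contains at least s+k−n and at most k ones. -/
theorem theorem_one_six
    (n r s k : ℕ) (hr0 : 0 < r) (hs0 : 0 < s) (hk0 : 0 < k) (hn0 : 0 < n)
    (hr : r ≤ n) (hs : s ≤ n) (hk : k ≤ n) (hrs : n ≤ r + s)
    (A : Fin r → Fin s → Bool)
    (hrow : ∀ i : Fin r,
      (s : ℤ) + (k : ℤ) - (n : ℤ) ≤
        ((Finset.univ.filter (fun j : Fin s => A i j = true)).card : ℤ) ∧
      (Finset.univ.filter (fun j : Fin s => A i j = true)).card ≤ k)
    (hcol : ∀ j : Fin s,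
      (r : ℤ) + (k : ℤ) - (n : ℤ) ≤
        ((Finset.univ.filter (fun i : Fin r => A i j = true)).card : ℤ) ∧
      (Finset.univ.filter (fun i : Fin r => A i j = true)).card ≤ k)
    (hlow : ((r : ℤ) + (s : ℤ) - (n : ℤ)) * (k : ℤ) ≤
      ((Finset.univ.filter (fun q : Fin r × Fin s => A q.1 q.2 = true)).card : ℤ))
    (hhigh : ((Finset.univ.filter (fun q : Fin r × Fin s => A q.1 q.2 = true)).card : ℤ) ≤
      (r : ℤ) * (s : ℤ) - ((n : ℤ) - (k : ℤ)) * ((r : ℤ) + (s : ℤ) - (n : ℤ))) :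
    ∃ B : Fin (n - r) → Fin s → Bool,
      (∀ j : Fin s,
        (Finset.univ.filter (fun i : Fin r => A i j = true)).card +
          (Finset.univ.filter (fun i : Fin (n - r) => B i j = true)).card = k) ∧
      (∀ i : Fin (n - r),
        (s : ℤ) + (k : ℤ) - (n : ℤ) ≤
          ((Finset.univ.filter (fun j : Fin s => B i j = true)).card : ℤ) ∧
        (Finset.univ.filter (fun j : Fin s => B i j = true)).card ≤ k) :=
  theorem_one_six_general n r s k hr A hcol hlow hhigh
end

section
/- For any state (R, D) of order n, all runs of the primary extension algorithm produce the same result: if some run stops with an eliminated file, then every run stops with an eliminated file; otherwise, all runs terminate at the same final state (R*, D*), including the same rook set and the same dot set. In particular, the primary extension of a state is unique. -/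
/-- A cell of the n×n×n cube. -/
abbrev Cell (n : ℕ) := Fin n × Fin n × Fin n

/-- The file (axis-parallel line) of the cube in direction `d`, obtained by fixing the
other two coordinates to `u` and `v`.  Direction 0 varies the first coordinate,
direction 1 the second, direction 2 the third. -/
def fileCells (n : ℕ) (d : Fin 3) (u v : Fin n) : Set (Cell n) :=
  if d = 0 then {x | x.2.1 = u ∧ x.2.2 = v}
  else if d = 1 then {x | x.1 = u ∧ x.2.2 = v}
  else {x | x.1 = u ∧ x.2.1 = v}

/-- Two cells share a file (equivalently: they agree in at least two coordinates). -/
def SameFile (n : ℕ) (a b : Cell n) : Prop :=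
  ∃ (d : Fin 3) (u v : Fin n), a ∈ fileCells n d u v ∧ b ∈ fileCells n d u v
/-- A set of non-attacking rooks: any two of its cells sharing a file are equal,
i.e. any two distinct rooks agree in at most one coordinate. -/
def NonAttacking (n : ℕ) (R : Set (Cell n)) : Prop :=
  ∀ a ∈ R, ∀ b ∈ R, SameFile n a b → a = b

/-- A state: a pair (R, D) of rook and dot sets.  It is valid if R and D are disjoint,
R is non-attacking, and no file contains both a rook and a dot. -/
def ValidState (n : ℕ) (S : Set (Cell n) × Set (Cell n)) : Prop :=
  Disjoint S.1 S.2 ∧ NonAttacking n S.1 ∧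
  ∀ (d : Fin 3) (u v : Fin n),
    ¬((S.1 ∩ fileCells n d u v).Nonempty ∧ (S.2 ∩ fileCells n d u v).Nonempty)

/-- A dot is desolate if some file contains it and no other dot. -/
def Desolate (n : ℕ) (S : Set (Cell n) × Set (Cell n)) (x : Cell n) : Prop :=
  x ∈ S.2 ∧ ∃ (d : Fin 3) (u v : Fin n), x ∈ fileCells n d u v ∧
    ∀ y ∈ S.2, y ∈ fileCells n d u v → y = x

/-- Treating a desolate dot x: x becomes a rook, and x together with every dot sharing
a file with x is deleted from the dot set. -/
def Treat (n : ℕ) (S : Set (Cell n) × Set (Cell n)) (x : Cell n) :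
    Set (Cell n) × Set (Cell n) :=
  (insert x S.1, {y ∈ S.2 | y ≠ x ∧ ¬ SameFile n y x})

/-- There is an eliminated file: a file containing neither a rook nor a dot. -/
def HasElimFile (n : ℕ) (S : Set (Cell n) × Set (Cell n)) : Prop :=
  ∃ (d : Fin 3) (u v : Fin n),
    S.1 ∩ fileCells n d u v = ∅ ∧ S.2 ∩ fileCells n d u v = ∅

/-- One step of the primary extension algorithm: if the algorithm has not stopped with
an eliminated file, an arbitrarily chosen desolate dot is treated. -/
def Step (n : ℕ) (S S' : Set (Cell n) × Set (Cell n)) : Prop :=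
  ¬ HasElimFile n S ∧ ∃ x, Desolate n S x ∧ S' = Treat n S x

/-- A state where the algorithm stops: either there is an eliminated file, or there is
no desolate dot (when every file contains a rook there is no dot, hence no desolate
dot, so this also covers the stopping condition (i)). -/
def Stopped (n : ℕ) (S : Set (Cell n) × Set (Cell n)) : Prop :=
  HasElimFile n S ∨ ¬ ∃ x, Desolate n S x

section Aux
variable {n : ℕ}

lemma sameFile_symm {a b : Cell n} (h : SameFile n a b) : SameFile n b a := by
  obtain ⟨d, u, v, h1, h2⟩ := h; exact ⟨d, u, v, h2, h1⟩

lemma mem_treat_dots {S : Set (Cell n) × Set (Cell n)} {x y : Cell n} :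
    y ∈ (Treat n S x).2 ↔ y ∈ S.2 ∧ y ≠ x ∧ ¬ SameFile n y x := Iff.rfl

lemma treat_dots_subset {S : Set (Cell n) × Set (Cell n)} {x : Cell n} :
    (Treat n S x).2 ⊆ S.2 := fun _ hy => hy.1

lemma treat_ncard_lt {S : Set (Cell n) × Set (Cell n)} {x : Cell n} (hx : x ∈ S.2) :
    (Treat n S x).2.ncard < S.2.ncard := by
  refine Set.ncard_lt_ncard ?_ (Set.toFinite _)
  rw [Set.ssubset_def]
  exact ⟨treat_dots_subset, fun h => (h hx).2.1 rfl⟩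

lemma treat_valid {S : Set (Cell n) × Set (Cell n)} {x : Cell n}
    (hS : ValidState n S) (hx : Desolate n S x) : ValidState n (Treat n S x) := by
  obtain ⟨hdisj, hna, hfile⟩ := hS
  refine ⟨?_, ?_, ?_⟩
  · rw [Set.disjoint_left]
    rintro a ha ⟨haD, hne, -⟩
    rcases ha with rfl | haR
    · exact hne rfl
    · exact Set.disjoint_left.mp hdisj haR haD
  · rintro a (rfl | haR) b (rfl | hbR) hsf
    · rfl
    · obtain ⟨d, u, v, h1, h2⟩ := hsf
      exact absurd ⟨⟨b, hbR, h2⟩, ⟨a, hx.1, h1⟩⟩ (hfile d u v)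
    · obtain ⟨d, u, v, h1, h2⟩ := hsf
      exact absurd ⟨⟨a, haR, h1⟩, ⟨b, hx.1, h2⟩⟩ (hfile d u v)
    · exact hna a haR b hbR hsf
  · rintro d u v ⟨⟨r, hr, hrF⟩, ⟨y, ⟨hyD, hyne, hysf⟩, hyF⟩⟩
    rcases hr with rfl | hrR
    · exact hysf ⟨d, u, v, hyF, hrF⟩
    · exact hfile d u v ⟨⟨r, hrR, hrF⟩, ⟨y, hyD, hyF⟩⟩

lemma desolate_preserved {S : Set (Cell n) × Set (Cell n)} {x y : Cell n}
    (hy : Desolate n S y) (hne : y ≠ x) (hsf : ¬ SameFile n y x) :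
    Desolate n (Treat n S x) y := by
  obtain ⟨hyD, d, u, v, hyF, honly⟩ := hy
  exact ⟨⟨hyD, hne, hsf⟩, d, u, v, hyF, fun z hz hzF => honly z hz.1 hzF⟩

lemma treat_comm (S : Set (Cell n) × Set (Cell n)) (x y : Cell n) :
    Treat n (Treat n S x) y = Treat n (Treat n S y) x := by
  unfold Treat
  refine Prod.ext ?_ ?_
  · simp [Set.insert_comm]
  · ext z
    constructor <;> rintro ⟨⟨h1, h2, h3⟩, h4, h5⟩ <;> exact ⟨⟨h1, h4, h5⟩, h2, h3⟩

lemma samefile_elim {S : Set (Cell n) × Set (Cell n)} {x y : Cell n}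
    (hS : ValidState n S) (hx : Desolate n S x) (hyD : y ∈ S.2)
    (hxy : x ≠ y) (hsf : SameFile n x y) :
    HasElimFile n (Treat n S y) := by
  obtain ⟨hxD, d, u, v, hxF, honly⟩ := hx
  refine ⟨d, u, v, ?_, ?_⟩
  · rw [Set.eq_empty_iff_forall_notMem]
    rintro r ⟨hr, hrF⟩
    rcases hr with rfl | hrR
    · exact hxy (honly r hyD hrF).symm
    · exact hS.2.2 d u v ⟨⟨r, hrR, hrF⟩, ⟨x, hxD, hxF⟩⟩
  · rw [Set.eq_empty_iff_forall_notMem]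
    rintro z ⟨⟨hzD, hzne, hzsf⟩, hzF⟩
    have hzx : z = x := honly z hzD hzF
    subst hzx
    exact hzsf hsf

lemma elim_of_elim_treat {S : Set (Cell n) × Set (Cell n)} {x₁ x₂ : Cell n}
    (e₁ : HasElimFile n (Treat n S x₁)) (hx₂ : Desolate n S x₂)
    (hxx : x₁ ≠ x₂) (hsf : ¬ SameFile n x₁ x₂) :
    HasElimFile n (Treat n (Treat n S x₂) x₁) := by
  obtain ⟨d, u, v, hR, hD⟩ := e₁
  rw [Set.eq_empty_iff_forall_notMem] at hR hD
  have hx₂F : x₂ ∉ fileCells n d u v := fun h =>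
    hD x₂ ⟨⟨hx₂.1, hxx.symm, fun hs => hsf (sameFile_symm hs)⟩, h⟩
  refine ⟨d, u, v, ?_, ?_⟩
  · rw [Set.eq_empty_iff_forall_notMem]
    rintro r ⟨hr, hrF⟩
    rcases hr with rfl | rfl | hrR
    · exact hR r ⟨Set.mem_insert _ _, hrF⟩
    · exact hx₂F hrF
    · exact hR r ⟨Set.mem_insert_of_mem _ hrR, hrF⟩
  · rw [Set.eq_empty_iff_forall_notMem]
    rintro z ⟨⟨⟨hzD, hz2, hzs2⟩, hz1, hzs1⟩, hzF⟩
    exact hD z ⟨⟨hzD, hz1, hzs1⟩, hzF⟩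

lemma stopped_rtg {S S' : Set (Cell n) × Set (Cell n)} (hS : Stopped n S)
    (h : Relation.ReflTransGen (Step n) S S') : S' = S := by
  rcases h.cases_head with rfl | ⟨c, ⟨hne, x, hx, -⟩, -⟩
  · rfl
  · rcases hS with h1 | h2
    · exact absurd h1 hne
    · exact absurd ⟨x, hx⟩ h2

lemma terminate (S : Set (Cell n) × Set (Cell n)) :
    ∃ W, Relation.ReflTransGen (Step n) S W ∧ Stopped n W := by
  generalize hN : S.2.ncard = N
  induction N using Nat.strong_induction_on generalizing S with
  | _ N IH =>
    by_cases h : Stopped n S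
    · exact ⟨S, .refl, h⟩
    · rw [Stopped, not_or, not_not] at h
      obtain ⟨hne, x, hx⟩ := h
      obtain ⟨W, hW, hWs⟩ := IH (Treat n S x).2.ncard (hN ▸ treat_ncard_lt hx.1) _ rfl
      exact ⟨W, .head ⟨hne, x, hx, rfl⟩ hW, hWs⟩

lemma main_aux (N : ℕ) : ∀ (S S₁ S₂ : Set (Cell n) × Set (Cell n)),
    S.2.ncard ≤ N → ValidState n S →
    Relation.ReflTransGen (Step n) S S₁ → Stopped n S₁ →
    Relation.ReflTransGen (Step n) S S₂ → Stopped n S₂ →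
    (HasElimFile n S₁ ↔ HasElimFile n S₂) ∧ (¬ HasElimFile n S₁ → S₁ = S₂) := by
  induction N using Nat.strong_induction_on with
  | _ N IH =>
  intro S S₁ S₂ hN hS h₁ hs₁ h₂ hs₂
  by_cases hstop : Stopped n S
  · obtain rfl := stopped_rtg hstop h₁
    obtain rfl := stopped_rtg hstop h₂
    exact ⟨Iff.rfl, fun _ => rfl⟩
  rcases h₁.cases_head with rfl | ⟨T₁, st₁, h₁'⟩
  · exact absurd hs₁ hstop
  rcases h₂.cases_head with rfl | ⟨T₂, st₂, h₂'⟩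
  · exact absurd hs₂ hstop
  obtain ⟨hne, x₁, hx₁, rfl⟩ := st₁
  obtain ⟨-, x₂, hx₂, rfl⟩ := st₂
  have IH' : ∀ x, Desolate n S x → ∀ A B,
      Relation.ReflTransGen (Step n) (Treat n S x) A → Stopped n A →
      Relation.ReflTransGen (Step n) (Treat n S x) B → Stopped n B →
      (HasElimFile n A ↔ HasElimFile n B) ∧ (¬ HasElimFile n A → A = B) := by
    intro x hx A B hA hsA hB hsB
    exact IH (Treat n S x).2.ncard (lt_of_lt_of_le (treat_ncard_lt hx.1) hN) _ A B
      le_rfl (treat_valid hS hx) hA hsA hB hsB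
  by_cases hxx : x₁ = x₂
  · subst hxx
    exact IH' x₁ hx₁ S₁ S₂ h₁' hs₁ h₂' hs₂
  by_cases hsf : SameFile n x₁ x₂
  · have e₂ : HasElimFile n (Treat n S x₂) := samefile_elim hS hx₁ hx₂.1 hxx hsf
    have e₁ : HasElimFile n (Treat n S x₁) :=
      samefile_elim hS hx₂ hx₁.1 (Ne.symm hxx) (sameFile_symm hsf)
    obtain rfl := stopped_rtg (Or.inl e₁) h₁'
    obtain rfl := stopped_rtg (Or.inl e₂) h₂'
    exact ⟨iff_of_true e₁ e₂, fun h => absurd e₁ h⟩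
  have hsf' : ¬ SameFile n x₂ x₁ := fun h => hsf (sameFile_symm h)
  have hd₂ : Desolate n (Treat n S x₁) x₂ := desolate_preserved hx₂ (Ne.symm hxx) hsf'
  have hd₁ : Desolate n (Treat n S x₂) x₁ := desolate_preserved hx₁ hxx hsf
  by_cases e₁ : HasElimFile n (Treat n S x₁)
  · obtain rfl := stopped_rtg (Or.inl e₁) h₁'
    by_cases e₂ : HasElimFile n (Treat n S x₂)
    · obtain rfl := stopped_rtg (Or.inl e₂) h₂'
      exact ⟨iff_of_true e₁ e₂, fun h => absurd e₁ h⟩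
    · have eU : HasElimFile n (Treat n (Treat n S x₂) x₁) :=
        elim_of_elim_treat e₁ hx₂ hxx hsf
      have P := IH' x₂ hx₂ S₂ _ h₂' hs₂
        (Relation.ReflTransGen.single ⟨e₂, x₁, hd₁, rfl⟩) (Or.inl eU)
      exact ⟨iff_of_true e₁ (P.1.mpr eU), fun h => absurd e₁ h⟩
  · by_cases e₂ : HasElimFile n (Treat n S x₂)
    · obtain rfl := stopped_rtg (Or.inl e₂) h₂'
      have eU : HasElimFile n (Treat n (Treat n S x₁) x₂) :=
        elim_of_elim_treat e₂ hx₁ (Ne.symm hxx) hsf'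
      have P := IH' x₁ hx₁ S₁ _ h₁' hs₁
        (Relation.ReflTransGen.single ⟨e₁, x₂, hd₂, rfl⟩) (Or.inl eU)
      exact ⟨iff_of_true (P.1.mpr eU) e₂, fun h => absurd (P.1.mpr eU) h⟩
    · obtain ⟨W, hUW, hWs⟩ := terminate (Treat n (Treat n S x₁) x₂)
      have st₁U : Step n (Treat n S x₁) (Treat n (Treat n S x₁) x₂) :=
        ⟨e₁, x₂, hd₂, rfl⟩
      have st₂U : Step n (Treat n S x₂) (Treat n (Treat n S x₁) x₂) :=
        ⟨e₂, x₁, hd₁, (treat_comm S x₁ x₂)⟩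
      have P₁ := IH' x₁ hx₁ S₁ W h₁' hs₁
        ((Relation.ReflTransGen.single st₁U).trans hUW) hWs
      have P₂ := IH' x₂ hx₂ S₂ W h₂' hs₂
        ((Relation.ReflTransGen.single st₂U).trans hUW) hWs
      refine ⟨P₁.1.trans P₂.1.symm, fun h => ?_⟩
      have hW : ¬ HasElimFile n W := fun hw => h (P₁.1.mpr hw)
      rw [P₁.2 h, P₂.2 (fun h2 => hW (P₂.1.mp h2))]

end Aux

/-- All runs of the primary extension algorithm from a given state produce
the same result: if one run stops with an eliminated file then so does every run, and
otherwise any two runs stop in the same final state (same rooks and same dots).  In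
particular the primary extension is unique. -/
theorem primary_extension_unique (n : ℕ) (S S₁ S₂ : Set (Cell n) × Set (Cell n))
    (hS : ValidState n S)
    (h₁ : Relation.ReflTransGen (Step n) S S₁) (hs₁ : Stopped n S₁)
    (h₂ : Relation.ReflTransGen (Step n) S S₂) (hs₂ : Stopped n S₂) :
    (HasElimFile n S₁ ↔ HasElimFile n S₂) ∧
    (¬ HasElimFile n S₁ → S₁ = S₂) :=
  main_aux S.2.ncard S S₁ S₂ le_rfl hS h₁ hs₁ h₂ hs₂
end

section
/- Every BUG of order n has exactly 0 or exactly 2 solutions; moreover, when it has two solutions, they are disjoint and their union is the whole dot set of the BUG. -/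
/-- The graph on a set `D` of dots: two dots are adjacent iff they are distinct and
share a file. -/
def dotGraph (n : ℕ) (D : Set (Cell n)) : SimpleGraph D :=
  SimpleGraph.fromRel (fun a b => SameFile n a.1 b.1)
/-- `D` is a BUG: nonempty, every file of the cube contains exactly 0 or exactly 2 dots
of `D`, and the dot graph is connected. -/
def IsBUG (n : ℕ) (D : Set (Cell n)) : Prop :=
  D.Nonempty ∧
  (∀ (d : Fin 3) (u v : Fin n),
      (D ∩ fileCells n d u v).ncard = 0 ∨ (D ∩ fileCells n d u v).ncard = 2) ∧
  (dotGraph n D).Connected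

/-- A solution of a BUG `D`: a subset of `D` containing exactly one of the two dots of
every file that meets `D`. -/
def IsSolution (n : ℕ) (D S : Set (Cell n)) : Prop :=
  S ⊆ D ∧ ∀ (d : Fin 3) (u v : Fin n), (D ∩ fileCells n d u v).Nonempty →
    ∃! x, x ∈ S ∧ x ∈ fileCells n d u v

lemma mem_own_file {n : ℕ} (x : Cell n) : x ∈ fileCells n 0 x.2.1 x.2.2 := by
  simp [fileCells]

lemma file_card_two {n : ℕ} {D : Set (Cell n)} (hD : IsBUG n D) {d : Fin 3} {u v : Fin n}
    (h : (D ∩ fileCells n d u v).Nonempty) : (D ∩ fileCells n d u v).ncard = 2 := by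
  rcases hD.2.1 d u v with h0 | h2
  · exact absurd ((Set.ncard_eq_zero (Set.toFinite _)).mp h0) h.ne_empty
  · exact h2

lemma pair_eq {α : Type*} {s : Set α} (hs : s.ncard = 2) {a b : α}
    (ha : a ∈ s) (hb : b ∈ s) (hab : a ≠ b) : s = {a, b} := by
  obtain ⟨c, e, hce, rfl⟩ := Set.ncard_eq_two.mp hs
  simp only [Set.mem_insert_iff, Set.mem_singleton_iff] at ha hb
  rcases ha with rfl | rfl <;> rcases hb with rfl | rfl <;>
    first | rfl | simp_all [Set.pair_comm]

lemma flip_lemma {n : ℕ} {D S : Set (Cell n)} (hD : IsBUG n D) (hS : IsSolution n D S)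
    {a b : Cell n} (ha : a ∈ D) (hb : b ∈ D) (hab : a ≠ b) {d : Fin 3} {u v : Fin n}
    (haf : a ∈ fileCells n d u v) (hbf : b ∈ fileCells n d u v) :
    (b ∈ S ↔ a ∉ S) := by
  have hne : (D ∩ fileCells n d u v).Nonempty := ⟨a, ha, haf⟩
  obtain ⟨x, ⟨hxS, hxf⟩, huniq⟩ := hS.2 d u v hne
  have hpair := pair_eq (file_card_two hD hne) ⟨ha, haf⟩ ⟨hb, hbf⟩ hab
  constructor
  · intro hbS haS
    exact hab ((huniq a ⟨haS, haf⟩).trans (huniq b ⟨hbS, hbf⟩).symm)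
  · intro haS
    have hx : x ∈ D ∩ fileCells n d u v := ⟨hS.1 hxS, hxf⟩
    rw [hpair] at hx
    rcases hx with rfl | rfl
    · exact absurd hxS haS
    · exact hxS

lemma compl_sol {n : ℕ} {D S : Set (Cell n)} (hD : IsBUG n D) (hS : IsSolution n D S) :
    IsSolution n D (D \ S) := by
  refine ⟨Set.diff_subset, fun d u v hne => ?_⟩
  obtain ⟨x, ⟨hxS, hxf⟩, huniq⟩ := hS.2 d u v hne
  obtain ⟨a, b, hab, hpair⟩ := Set.ncard_eq_two.mp (file_card_two hD hne)
  have hxD : x ∈ D ∩ fileCells n d u v := ⟨hS.1 hxS, hxf⟩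
  rw [hpair] at hxD
  -- wlog x = a
  have key : ∀ a b : Cell n, a ≠ b → D ∩ fileCells n d u v = {a, b} → x = a →
      ∃! y, y ∈ D \ S ∧ y ∈ fileCells n d u v := by
    intro a b hab hpair hxa
    subst hxa
    have hbmem : b ∈ D ∩ fileCells n d u v := by rw [hpair]; simp
    have hbS : b ∉ S := fun hbS => hab (huniq b ⟨hbS, hbmem.2⟩).symm
    refine ⟨b, ⟨⟨hbmem.1, hbS⟩, hbmem.2⟩, ?_⟩
    rintro y ⟨⟨hyD, hyS⟩, hyf⟩
    have : y ∈ D ∩ fileCells n d u v := ⟨hyD, hyf⟩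
    rw [hpair] at this
    rcases this with rfl | rfl
    · exact absurd hxS hyS
    · rfl
  rcases hxD with rfl | rfl
  · exact key x b hab hpair rfl
  · exact key x a (Ne.symm hab) (by rw [hpair, Set.pair_comm]) rfl

lemma sols_eq_of_agree {n : ℕ} {D S T : Set (Cell n)} (hD : IsBUG n D)
    (hS : IsSolution n D S) (hT : IsSolution n D T) {a : Cell n} (haD : a ∈ D)
    (hagree : a ∈ S ↔ a ∈ T) : S = T := by
  have step : ∀ {p q : D}, (dotGraph n D).Adj p q →
      ((p : Cell n) ∈ S ↔ (p : Cell n) ∈ T) → ((q : Cell n) ∈ S ↔ (q : Cell n) ∈ T) := by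
    intro p q hadj hpq
    rw [dotGraph, SimpleGraph.fromRel_adj] at hadj
    obtain ⟨hne, hsf⟩ := hadj
    have hne' : (p : Cell n) ≠ (q : Cell n) := fun h => hne (Subtype.ext h)
    obtain ⟨d, u, v, hpf, hqf⟩ : SameFile n p.1 q.1 := by
      rcases hsf with h | ⟨d, u, v, h1, h2⟩
      · exact h
      · exact ⟨d, u, v, h2, h1⟩
    rw [flip_lemma hD hS p.2 q.2 hne' hpf hqf,
        flip_lemma hD hT p.2 q.2 hne' hpf hqf]
    exact not_congr hpq
  have walk : ∀ {p q : D} (_ : (dotGraph n D).Walk p q),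
      ((p : Cell n) ∈ S ↔ (p : Cell n) ∈ T) → ((q : Cell n) ∈ S ↔ (q : Cell n) ∈ T) := by
    intro p q w
    induction w with
    | nil => exact id
    | cons h _ ih => exact fun hp => ih (step h hp)
  ext x
  by_cases hxD : x ∈ D
  · obtain ⟨w⟩ := hD.2.2.preconnected ⟨a, haD⟩ ⟨x, hxD⟩
    exact walk w hagree
  · exact ⟨fun h => absurd (hS.1 h) hxD, fun h => absurd (hT.1 h) hxD⟩


/-- BUG theorem: Every BUG has exactly 0 or exactly 2 solutions;
when it has two, they are disjoint and their union is the whole dot set. -/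
theorem bug_theorem (n : ℕ) (D : Set (Cell n)) (hD : IsBUG n D) :
    (¬ ∃ S, IsSolution n D S) ∨
    (∃ S₁ S₂ : Set (Cell n),
      IsSolution n D S₁ ∧ IsSolution n D S₂ ∧ S₁ ≠ S₂ ∧
      Disjoint S₁ S₂ ∧ S₁ ∪ S₂ = D ∧
      ∀ S, IsSolution n D S → S = S₁ ∨ S = S₂) := by
  by_cases hex : ∃ S, IsSolution n D S
  · obtain ⟨S, hS⟩ := hex
    right
    obtain ⟨x, hxD⟩ := hD.1
    have hxf := mem_own_file x
    have hne : (D ∩ fileCells n 0 x.2.1 x.2.2).Nonempty := ⟨x, hxD, hxf⟩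
    obtain ⟨y, ⟨hyS, hyf⟩, _⟩ := hS.2 0 x.2.1 x.2.2 hne
    have hSne : S.Nonempty := ⟨y, hyS⟩
    refine ⟨S, D \ S, hS, compl_sol hD hS, ?_, Set.disjoint_sdiff_right, ?_, ?_⟩
    · intro h
      obtain ⟨z, hz⟩ := hSne
      have : z ∈ D \ S := h ▸ hz
      exact this.2 hz
    · rw [Set.union_diff_cancel hS.1]
    · intro T hT
      by_cases hyT : y ∈ T
      · left; exact (sols_eq_of_agree hD hT hS (hS.1 hyS) (by simp [hyT, hyS]))
      · right
        exact sols_eq_of_agree hD hT (compl_sol hD hS) (hS.1 hyS)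
          (by simp [hyT, hyS])
  · left; exact hex
end

section
/- In the graph of any BUG of order n (vertices are the dots, two dots adjacent exactly when they share a file), every cycle of odd length has length at least 7. -/
def coordFn {n : ℕ} (i : Fin 3) (x : Cell n) : Fin n :=
  if i = 0 then x.1 else if i = 1 then x.2.1 else x.2.2

/-- Adjacent dots differ in exactly one coordinate. -/
lemma adj_dir {n : ℕ} {D : Set (Cell n)} {a b : D} (h : (dotGraph n D).Adj a b) :
    ∃ i : Fin 3, coordFn i a.1 ≠ coordFn i b.1 ∧
      ∀ j, j ≠ i → coordFn j a.1 = coordFn j b.1 := by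
  obtain ⟨hne, hsf⟩ := h
  have hne' : a.1 ≠ b.1 := fun h => hne (Subtype.ext h)
  have hsf' : SameFile n a.1 b.1 := by
    rcases hsf with h | h
    · exact h
    · obtain ⟨d, u, v, h1, h2⟩ := h; exact ⟨d, u, v, h2, h1⟩
  obtain ⟨d, u, v, h1, h2⟩ := hsf'
  fin_cases d <;> simp [fileCells] at h1 h2
  · exact ⟨0, by simp [coordFn]; intro h; apply hne'; ext <;> simp_all,
      by intro j hj; fin_cases j <;> simp_all [coordFn]⟩
  · exact ⟨1, by simp [coordFn]; intro h; apply hne'; ext <;> simp_all,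
      by intro j hj; fin_cases j <;> simp_all [coordFn]⟩
  · exact ⟨2, by simp [coordFn]; intro h; apply hne'; ext <;> simp_all,
      by intro j hj; fin_cases j <;> simp_all [coordFn]⟩

/-- If a,b and b,c differ only in coordinate i, and all are dots, then a = c. -/
lemma key {n : ℕ} {D : Set (Cell n)} (hD : IsBUG n D) {a b c : Cell n}
    (ha : a ∈ D) (hb : b ∈ D) (hc : c ∈ D) (i : Fin 3)
    (hab : ∀ j, j ≠ i → coordFn j a = coordFn j b)
    (hbc : ∀ j, j ≠ i → coordFn j b = coordFn j c)
    (hab' : a ≠ b) (hbc' : b ≠ c) : a = c := by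
  by_contra hac
  -- the file through b in direction i
  obtain ⟨u, v, hmem⟩ : ∃ u v, a ∈ fileCells n i u v ∧ b ∈ fileCells n i u v ∧
      c ∈ fileCells n i u v := by
    fin_cases i
    · exact ⟨b.2.1, b.2.2, by
        simp [fileCells]
        exact ⟨⟨hab 1 (by decide), hab 2 (by decide)⟩, (hbc 1 (by decide)).symm,
          (hbc 2 (by decide)).symm⟩⟩
    · exact ⟨b.1, b.2.2, by
        simp [fileCells]
        exact ⟨⟨hab 0 (by decide), hab 2 (by decide)⟩, (hbc 0 (by decide)).symm,
          (hbc 2 (by decide)).symm⟩⟩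
    · exact ⟨b.1, b.2.1, by
        simp [fileCells]
        exact ⟨⟨hab 0 (by decide), hab 1 (by decide)⟩, (hbc 0 (by decide)).symm,
          (hbc 1 (by decide)).symm⟩⟩
  have hsub : ({a, b, c} : Set (Cell n)) ⊆ D ∩ fileCells n i u v := by
    intro x hx
    rcases hx with rfl | rfl | rfl
    · exact ⟨ha, hmem.1⟩
    · exact ⟨hb, hmem.2.1⟩
    · exact ⟨hc, hmem.2.2⟩
  have h3 : ({a, b, c} : Set (Cell n)).ncard = 3 := by
    rw [Set.ncard_eq_three]; exact ⟨a, b, c, hab', hac, hbc', rfl⟩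
  have hle : ({a, b, c} : Set (Cell n)).ncard ≤ (D ∩ fileCells n i u v).ncard :=
    Set.ncard_le_ncard hsub (Set.toFinite _)
  rcases hD.2.1 i u v with h | h <;> omega

lemma fin3_once : ∀ a b c d e : Fin 3, a ≠ b → b ≠ c → c ≠ d → d ≠ e → e ≠ a →
    (b ≠ a ∧ c ≠ a ∧ d ≠ a ∧ e ≠ a) ∨
    (a ≠ b ∧ c ≠ b ∧ d ≠ b ∧ e ≠ b) ∨
    (a ≠ c ∧ b ≠ c ∧ d ≠ c ∧ e ≠ c) ∨
    (a ≠ d ∧ b ≠ d ∧ c ≠ d ∧ e ≠ d) ∨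
    (a ≠ e ∧ b ≠ e ∧ c ≠ e ∧ d ≠ e) := by
  intro a b c d e
  simp only [Ne, Fin.ext_iff]
  omega

lemma ne_cell {n : ℕ} {D : Set (Cell n)} {a b : D} (h : a ≠ b) : a.1 ≠ b.1 :=
  fun hh => h (Subtype.ext hh)


/-- In the graph of any BUG, every odd cycle has length at least 7. -/
theorem bug_odd_cycle_length_ge_seven (n : ℕ) (D : Set (Cell n)) (hD : IsBUG n D) :
    ∀ (v : D) (c : (dotGraph n D).Walk v v), c.IsCycle → Odd c.length → 7 ≤ c.length := by
  intro v c hc hodd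
  by_contra hlt
  push_neg at hlt
  have h3 : 3 ≤ c.length := hc.three_le_length
  obtain ⟨k, hk⟩ := hodd
  have hlen : c.length = 3 ∨ c.length = 5 := by omega
  clear hlt h3 hk
  cases c with
  | nil => simp at hlen
  | cons h1 p1 =>
    cases p1 with
    | nil => simp at hlen
    | cons h2 p2 =>
      cases p2 with
      | nil => simp at hlen
      | cons h3 p3 =>
        cases p3 with
        | nil =>
          -- triangle case
          rename_i u1 u2
          have hnd := hc.support_nodup
          simp [SimpleGraph.Walk.support_cons] at hnd
          obtain ⟨⟨n12, n1v⟩, n2v⟩ := hnd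
          obtain ⟨i1, hi1, ha1⟩ := adj_dir h1
          obtain ⟨i2, hi2, ha2⟩ := adj_dir h2
          obtain ⟨i3, hi3, ha3⟩ := adj_dir h3
          have h12 : i1 ≠ i2 := by
            intro h; rw [h] at ha1
            exact n2v (Subtype.ext
              (key hD v.2 u1.2 u2.2 i2 ha1 ha2 (ne_cell h1.1) (ne_cell h2.1))).symm
          have h23 : i2 ≠ i3 := by
            intro h; rw [h] at ha2
            exact n1v (Subtype.ext
              (key hD u1.2 u2.2 v.2 i3 ha2 ha3 (ne_cell h2.1) (ne_cell h3.1)))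
          have h31 : i3 ≠ i1 := by
            intro h; rw [h] at ha3
            exact n12 (Subtype.ext
              (key hD u2.2 v.2 u1.2 i1 ha3 ha1 (ne_cell h3.1) (ne_cell h1.1))).symm
          exact hi1 (((ha2 i1 h12).trans (ha3 i1 (Ne.symm h31))).symm)
        | cons h4 p4 =>
          cases p4 with
          | nil => simp at hlen
          | cons h5 p5 =>
            cases p5 with
            | nil =>
              -- pentagon case
              rename_i u1 u2 u3 u4
              have hnd := hc.support_nodup
              simp [SimpleGraph.Walk.support_cons] at hnd
              obtain ⟨⟨n12, n13, n14, n1v⟩, ⟨n23, n24, n2v⟩, ⟨n34, n3v⟩, n4v⟩ := hnd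
              obtain ⟨i1, hi1, ha1⟩ := adj_dir h1
              obtain ⟨i2, hi2, ha2⟩ := adj_dir h2
              obtain ⟨i3, hi3, ha3⟩ := adj_dir h3
              obtain ⟨i4, hi4, ha4⟩ := adj_dir h4
              obtain ⟨i5, hi5, ha5⟩ := adj_dir h5
              have h12 : i1 ≠ i2 := by
                intro h; rw [h] at ha1
                exact n2v (Subtype.ext
                  (key hD v.2 u1.2 u2.2 i2 ha1 ha2 (ne_cell h1.1) (ne_cell h2.1))).symm
              have h23 : i2 ≠ i3 := by
                intro h; rw [h] at ha2
                exact n13 (Subtype.ext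
                  (key hD u1.2 u2.2 u3.2 i3 ha2 ha3 (ne_cell h2.1) (ne_cell h3.1)))
              have h34 : i3 ≠ i4 := by
                intro h; rw [h] at ha3
                exact n24 (Subtype.ext
                  (key hD u2.2 u3.2 u4.2 i4 ha3 ha4 (ne_cell h3.1) (ne_cell h4.1)))
              have h45 : i4 ≠ i5 := by
                intro h; rw [h] at ha4
                exact n3v (Subtype.ext
                  (key hD u3.2 u4.2 v.2 i5 ha4 ha5 (ne_cell h4.1) (ne_cell h5.1)))
              have h51 : i5 ≠ i1 := by
                intro h; rw [h] at ha5
                exact n14 (Subtype.ext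
                  (key hD u4.2 v.2 u1.2 i1 ha5 ha1 (ne_cell h5.1) (ne_cell h1.1))).symm
              rcases fin3_once i1 i2 i3 i4 i5 h12 h23 h34 h45 h51 with
                ⟨p2', p3', p4', p5'⟩ | ⟨p1', p3', p4', p5'⟩ | ⟨p1', p2', p4', p5'⟩ |
                ⟨p1', p2', p3', p5'⟩ | ⟨p1', p2', p3', p4'⟩
              · exact hi1 ((((ha2 i1 (Ne.symm p2')).trans (ha3 i1 (Ne.symm p3'))).trans
                  ((ha4 i1 (Ne.symm p4')).trans (ha5 i1 (Ne.symm p5')))).symm)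
              · exact hi2 ((((ha3 i2 (Ne.symm p3')).trans (ha4 i2 (Ne.symm p4'))).trans
                  ((ha5 i2 (Ne.symm p5')).trans (ha1 i2 (Ne.symm p1')))).symm)
              · exact hi3 ((((ha4 i3 (Ne.symm p4')).trans (ha5 i3 (Ne.symm p5'))).trans
                  ((ha1 i3 (Ne.symm p1')).trans (ha2 i3 (Ne.symm p2')))).symm)
              · exact hi4 ((((ha5 i4 (Ne.symm p5')).trans (ha1 i4 (Ne.symm p1'))).trans
                  ((ha2 i4 (Ne.symm p2')).trans (ha3 i4 (Ne.symm p3')))).symm)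
              · exact hi5 ((((ha1 i5 (Ne.symm p1')).trans (ha2 i5 (Ne.symm p2'))).trans
                  ((ha3 i5 (Ne.symm p3')).trans (ha4 i5 (Ne.symm p4')))).symm)
            | cons h6 p6 => simp at hlen
end

section
/- Let R ⊆ {1,…,n}³ be a set of non-attacking rooks. Suppose there exists a set D ⊆ {1,…,n}³ of cells (dots), disjoint from R, such that: no file of the cube contains both a rook and a dot; every rook-free file contains at least one dot; and for every connected component C of the graph on D (two dots adjacent exactly when they share a file) there is an integer k > 1 such that every file of the cube meeting C contains exactly k dots. Then R satisfies the capacity condition. -/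
/-- The capacity condition: for all X, Y, Z ⊆ {1,…,n} the number of rooks of `R` in
X×Y×Z is at most cap(n,|X|,|Y|,|Z|) = |X||Y| − (n−|Z|)(|X|+|Y|−n). -/
def CapacityCondition (n : ℕ) (R : Set (Cell n)) : Prop :=
  ∀ X Y Z : Finset (Fin n),
    (({x ∈ R | x.1 ∈ X ∧ x.2.1 ∈ Y ∧ x.2.2 ∈ Z}).ncard : ℤ) ≤
      (X.card : ℤ) * (Y.card : ℤ) -
        ((n : ℤ) - (Z.card : ℤ)) * ((X.card : ℤ) + (Y.card : ℤ) - (n : ℤ))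

/-!
Give every rook weight `1` and every dot of a `k`-uniform component weight `1 / k`. Every file
then has total weight `1`: a file with a rook holds exactly that rook and no dot, and a rook-free
file holds exactly `k` dots, all of one component. So the weights form a fractional Latin cube
extending `R`. For a fractional Latin cube the weight of `X × Y × Z` is `|X||Y|` minus the weight
of `X × Y × Zᶜ`, and each layer `X × Y × {c}` weighs at least `|X| + |Y| - n`, because the
columns of that layer outside `Y` weigh `n - |Y|` in total. Since rooks have weight `1`, the
capacity bound follows.
-/

open Finset

structure IsFractionalLatinCube {α 𝕜 : Type*} [Fintype α] [AddCommMonoidWithOne 𝕜] [LE 𝕜]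
    (w : α × α × α → 𝕜) : Prop where
  nonneg : ∀ x, 0 ≤ w x
  sum_fst : ∀ j k, ∑ i, w (i, j, k) = 1
  sum_snd : ∀ i k, ∑ j, w (i, j, k) = 1
  sum_thd : ∀ i j, ∑ k, w (i, j, k) = 1

namespace IsFractionalLatinCube

variable {α 𝕜 : Type*} [Fintype α] [DecidableEq α] [CommRing 𝕜] [LinearOrder 𝕜]
  [IsStrictOrderedRing 𝕜] {w : α × α × α → 𝕜}

theorem le_sum_layer (hw : IsFractionalLatinCube w) (X Y : Finset α) (k : α) :
    (#X + #Y - Fintype.card α : 𝕜) ≤ ∑ i ∈ X, ∑ j ∈ Y, w (i, j, k) := by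
  have hsplit (i : α) : ∑ j ∈ Y, w (i, j, k) = 1 - ∑ j ∈ Yᶜ, w (i, j, k) :=
    eq_sub_of_add_eq' ((sum_compl_add_sum Y _).trans (hw.sum_snd i k))
  have hout : ∑ i ∈ X, ∑ j ∈ Yᶜ, w (i, j, k) ≤ Fintype.card α - #Y :=
    calc ∑ i ∈ X, ∑ j ∈ Yᶜ, w (i, j, k)
        ≤ ∑ i, ∑ j ∈ Yᶜ, w (i, j, k) :=
          sum_le_sum_of_subset_of_nonneg (subset_univ X) fun i _ _ ↦
            sum_nonneg fun j _ ↦ hw.nonneg _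
      _ = ∑ j ∈ Yᶜ, ∑ i, w (i, j, k) := sum_comm
      _ = Fintype.card α - #Y := by
          simp [hw.sum_fst, card_compl, Nat.cast_sub (card_le_univ Y)]
  simp only [hsplit, sum_sub_distrib, sum_const, nsmul_one]
  linarith

theorem sum_box_le (hw : IsFractionalLatinCube w) (X Y Z : Finset α) :
    ∑ i ∈ X, ∑ j ∈ Y, ∑ k ∈ Z, w (i, j, k) ≤
      #X * #Y - (Fintype.card α - #Z) * (#X + #Y - Fintype.card α) := by
  have hsplit (i j : α) : ∑ k ∈ Z, w (i, j, k) = 1 - ∑ k ∈ Zᶜ, w (i, j, k) :=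
    eq_sub_of_add_eq' ((sum_compl_add_sum Z _).trans (hw.sum_thd i j))
  have hlayers : (Fintype.card α - #Z) * (#X + #Y - Fintype.card α : 𝕜) ≤
      ∑ k ∈ Zᶜ, ∑ i ∈ X, ∑ j ∈ Y, w (i, j, k) := by
    simpa [card_compl, Nat.cast_sub (card_le_univ Z)] using
      card_nsmul_le_sum Zᶜ _ _ fun k _ ↦ hw.le_sum_layer X Y k
  have hswap : ∑ i ∈ X, ∑ j ∈ Y, ∑ k ∈ Zᶜ, w (i, j, k) =
      ∑ k ∈ Zᶜ, ∑ i ∈ X, ∑ j ∈ Y, w (i, j, k) := by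
    simp_rw [sum_comm (s := Y)]
    exact sum_comm
  simp only [hsplit, sum_sub_distrib, sum_const, nsmul_eq_mul, mul_one, hswap]
  linarith

end IsFractionalLatinCube

theorem capacityCondition_of_isFractionalLatinCube {n : ℕ} {R : Set (Cell n)} {w : Cell n → ℚ}
    (hw : IsFractionalLatinCube w) (hwR : ∀ x ∈ R, w x = 1) : CapacityCondition n R := by
  classical
  intro X Y Z
  have hrooks : {x ∈ R | x.1 ∈ X ∧ x.2.1 ∈ Y ∧ x.2.2 ∈ Z} = ↑({x ∈ X ×ˢ Y ×ˢ Z | x ∈ R}) := by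
    ext x
    simp only [Set.mem_ofPred_eq, coe_filter, mem_product]
    tauto
  have hcount : (#{x ∈ X ×ˢ Y ×ˢ Z | x ∈ R} : ℚ) ≤ ∑ i ∈ X, ∑ j ∈ Y, ∑ k ∈ Z, w (i, j, k) :=
    calc (#{x ∈ X ×ˢ Y ×ˢ Z | x ∈ R} : ℚ)
        = ∑ x ∈ X ×ˢ Y ×ˢ Z with x ∈ R, w x := by
          rw [sum_congr rfl fun x hx ↦ hwR x (mem_filter.mp hx).2]
          simp
      _ ≤ ∑ x ∈ X ×ˢ Y ×ˢ Z, w x :=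
          sum_le_sum_of_subset_of_nonneg (filter_subset _ _) fun x _ _ ↦ hw.nonneg x
      _ = ∑ i ∈ X, ∑ j ∈ Y, ∑ k ∈ Z, w (i, j, k) := by
          simp_rw [sum_product]
  have hbox := hw.sum_box_le X Y Z
  rw [Fintype.card_fin] at hbox
  rw [hrooks, Set.ncard_coe_finset]
  exact_mod_cast hcount.trans hbox

section Files

variable {n : ℕ}

theorem fileCells_zero (u v : Fin n) : fileCells n 0 u v = Set.range fun i ↦ (i, u, v) := by
  ext ⟨a, b, c⟩
  simp [fileCells, eq_comm]

theorem fileCells_one (u v : Fin n) : fileCells n 1 u v = Set.range fun j ↦ (u, j, v) := by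
  ext ⟨a, b, c⟩
  simp [fileCells, eq_comm]

theorem fileCells_two (u v : Fin n) : fileCells n 2 u v = Set.range fun k ↦ (u, v, k) := by
  ext ⟨a, b, c⟩
  simp [fileCells, eq_comm]

theorem isFractionalLatinCube_of_finsum_fileCells {w : Cell n → ℚ} (hw : ∀ x, 0 ≤ w x)
    (hfile : ∀ d u v, ∑ᶠ x ∈ fileCells n d u v, w x = 1) : IsFractionalLatinCube w where
  nonneg := hw
  sum_fst j k := by
    rw [← finsum_eq_sum_of_fintype, ← finsum_mem_range (Prod.mk_left_injective _),
      ← fileCells_zero, hfile]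
  sum_snd i k := by
    rw [← finsum_eq_sum_of_fintype,
      ← finsum_mem_range (g := fun j ↦ (i, j, k))
        ((Prod.mk_right_injective i).comp (Prod.mk_left_injective k)),
      ← fileCells_one, hfile]
  sum_thd i j := by
    rw [← finsum_eq_sum_of_fintype,
      ← finsum_mem_range (g := fun k ↦ (i, j, k))
        ((Prod.mk_right_injective i).comp (Prod.mk_right_injective j)),
      ← fileCells_two, hfile]

end Files

section Dots

variable {n : ℕ} {R D : Set (Cell n)}

theorem dotGraph_connectedComponentMk_eq_of_mem_fileCells {d : Fin 3} {u v : Fin n} {x y : D}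
    (hx : (x : Cell n) ∈ fileCells n d u v) (hy : (y : Cell n) ∈ fileCells n d u v) :
    (dotGraph n D).connectedComponentMk x = (dotGraph n D).connectedComponentMk y := by
  obtain rfl | hxy := eq_or_ne x y
  · rfl
  · refine SimpleGraph.ConnectedComponent.sound (SimpleGraph.Adj.reachable ?_)
    exact (SimpleGraph.fromRel_adj _ _ _).mpr ⟨hxy, Or.inl ⟨d, u, v, hx, hy⟩⟩

open Classical in
noncomputable def rookDotWeight (R D : Set (Cell n)) (k : (dotGraph n D).ConnectedComponent → ℕ)
    (x : Cell n) : ℚ :=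
  if x ∈ R then 1
  else if h : x ∈ D then ((k ((dotGraph n D).connectedComponentMk ⟨x, h⟩) : ℚ))⁻¹ else 0

variable {k : (dotGraph n D).ConnectedComponent → ℕ}

theorem rookDotWeight_nonneg (x : Cell n) : 0 ≤ rookDotWeight R D k x := by
  unfold rookDotWeight
  split_ifs <;> positivity

theorem support_rookDotWeight_subset : Function.support (rookDotWeight R D k) ⊆ R ∪ D := by
  intro x hx
  by_contra hRD
  rw [Set.mem_union, not_or] at hRD
  exact hx (by simp [rookDotWeight, hRD.1, hRD.2])

theorem finsum_mem_rookDotWeight_of_inter_eq_singleton {F : Set (Cell n)} {a : Cell n}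
    (hRF : R ∩ F = {a}) (hDF : Disjoint D F) : ∑ᶠ x ∈ F, rookDotWeight R D k x = 1 := by
  have haR : a ∈ R := (Set.eq_singleton_iff_unique_mem.mp hRF).1.1
  rw [finsum_mem_inter_support_eq' _ F {a} fun x hx ↦ ?_, finsum_mem_singleton]
  · simp [rookDotWeight, haR]
  rw [← hRF]
  rcases support_rookDotWeight_subset hx with hxR | hxD
  · exact ⟨fun hxF ↦ ⟨hxR, hxF⟩, And.right⟩
  · exact iff_of_false (hDF.notMem_of_mem_left hxD) fun h ↦ hDF.notMem_of_mem_left hxD h.2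

theorem finsum_mem_rookDotWeight_of_dots {F : Set (Cell n)}
    {C : (dotGraph n D).ConnectedComponent} (hRF : Disjoint R F)
    (hC : ∀ x : D, (x : Cell n) ∈ F → (dotGraph n D).connectedComponentMk x = C)
    (hcard : (D ∩ F).ncard = k C) (hk : k C ≠ 0) : ∑ᶠ x ∈ F, rookDotWeight R D k x = 1 := by
  have hweight : ∀ x ∈ D ∩ F, rookDotWeight R D k x = (k C : ℚ)⁻¹ := by
    rintro x ⟨hxD, hxF⟩
    simp [rookDotWeight, hRF.notMem_of_mem_right hxF, hxD, hC ⟨x, hxD⟩ hxF]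
  rw [finsum_mem_inter_support_eq' _ F (D ∩ F) fun x hx ↦ ?_, finsum_mem_congr rfl hweight]
  · classical
    rw [finsum_mem_eq_toFinset_sum, sum_const, ← Set.ncard_eq_toFinset_card', hcard, nsmul_eq_mul]
    exact mul_inv_cancel₀ (Nat.cast_ne_zero.mpr hk)
  rcases support_rookDotWeight_subset hx with hxR | hxD
  · simp [hRF.notMem_of_mem_left hxR]
  · simp [hxD]

theorem finsum_mem_fileCells_rookDotWeight (hR : NonAttacking n R)
    (hsep : ∀ (d : Fin 3) (u v : Fin n),
      ¬((R ∩ fileCells n d u v).Nonempty ∧ (D ∩ fileCells n d u v).Nonempty))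
    (hcover : ∀ (d : Fin 3) (u v : Fin n),
      R ∩ fileCells n d u v = ∅ → (D ∩ fileCells n d u v).Nonempty)
    (hk : ∀ C, k C ≠ 0)
    (hunif : ∀ C (d : Fin 3) (u v : Fin n),
      (∃ x : D, (dotGraph n D).connectedComponentMk x = C ∧ (x : Cell n) ∈ fileCells n d u v) →
        (D ∩ fileCells n d u v).ncard = k C)
    (d : Fin 3) (u v : Fin n) : ∑ᶠ x ∈ fileCells n d u v, rookDotWeight R D k x = 1 := by
  obtain ⟨a, haR, haF⟩ | hRF := (R ∩ fileCells n d u v).eq_empty_or_nonempty.symm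
  · refine finsum_mem_rookDotWeight_of_inter_eq_singleton (a := a) ?_ ?_
    · refine Set.eq_singleton_iff_unique_mem.mpr ⟨⟨haR, haF⟩, ?_⟩
      rintro b ⟨hbR, hbF⟩
      exact hR b hbR a haR ⟨d, u, v, hbF, haF⟩
    · exact Set.disjoint_left.mpr fun x hxD hxF ↦ hsep d u v ⟨⟨a, haR, haF⟩, x, hxD, hxF⟩
  · obtain ⟨x, hxD, hxF⟩ := hcover d u v hRF
    exact finsum_mem_rookDotWeight_of_dots (Set.disjoint_iff_inter_eq_empty.mpr hRF)
      (fun y hyF ↦ dotGraph_connectedComponentMk_eq_of_mem_fileCells hyF hxF)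
      (hunif _ d u v ⟨⟨x, hxD⟩, rfl, hxF⟩) (hk _)

end Dots

theorem capacity_of_uniformly_distributed_general (n : ℕ) (R D : Set (Cell n))
    (hR : NonAttacking n R)
    (hsep : ∀ (d : Fin 3) (u v : Fin n),
      ¬((R ∩ fileCells n d u v).Nonempty ∧ (D ∩ fileCells n d u v).Nonempty))
    (hcover : ∀ (d : Fin 3) (u v : Fin n),
      R ∩ fileCells n d u v = ∅ → (D ∩ fileCells n d u v).Nonempty)
    (hunif : ∀ C : (dotGraph n D).ConnectedComponent, ∃ k : ℕ, 1 < k ∧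
      ∀ (d : Fin 3) (u v : Fin n),
        (∃ x : D, (dotGraph n D).connectedComponentMk x = C ∧
          (x : Cell n) ∈ fileCells n d u v) →
        (D ∩ fileCells n d u v).ncard = k) :
    CapacityCondition n R := by
  choose k hk hfile using hunif
  refine capacityCondition_of_isFractionalLatinCube (w := rookDotWeight R D k)
    (isFractionalLatinCube_of_finsum_fileCells rookDotWeight_nonneg fun d u v ↦ ?_)
    fun x hx ↦ if_pos hx
  exact finsum_mem_fileCells_rookDotWeight hR hsep hcover (fun C ↦ Nat.ne_zero_of_lt (hk C))
    hfile d u v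

/-- If the rook-free part of the cube carries a dot set `D` (disjoint from
the rooks, no file containing both a rook and a dot, every rook-free file containing at
least one dot) such that every connected component of the dot graph is k-uniformly
distributed for some k > 1 (every file meeting the component contains exactly k dots),
then the rook set `R` satisfies the capacity condition. -/
theorem capacity_of_uniformly_distributed (n : ℕ) (R D : Set (Cell n))
    (hR : NonAttacking n R) (hdisj : Disjoint R D)
    (hsep : ∀ (d : Fin 3) (u v : Fin n),
      ¬((R ∩ fileCells n d u v).Nonempty ∧ (D ∩ fileCells n d u v).Nonempty))
    (hcover : ∀ (d : Fin 3) (u v : Fin n),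
      R ∩ fileCells n d u v = ∅ → (D ∩ fileCells n d u v).Nonempty)
    (hunif : ∀ C : (dotGraph n D).ConnectedComponent, ∃ k : ℕ, 1 < k ∧
      ∀ (d : Fin 3) (u v : Fin n),
        (∃ x : D, (dotGraph n D).connectedComponentMk x = C ∧
          (x : Cell n) ∈ fileCells n d u v) →
        (D ∩ fileCells n d u v).ncard = k) :
    CapacityCondition n R :=
  capacity_of_uniformly_distributed_general n R D hR hsep hcover hunif
end

section
/- Let R ⊆ {1,…,n}³ be a set of non-attacking rooks and let D ⊆ {1,…,n}³ be a set of dots disjoint from R such that: no file contains both a rook and a dot; every rook-free file contains exactly two dots of D; and D is a complete candidate set for R, meaning that every completion L of R satisfies L ∖ R ⊆ D. If R has a completion, then every connected component C of the graph on D (two dots adjacent exactly when they share a file) is solvable, i.e., there exists a subset S ⊆ C containing exactly one of the two dots of every file that meets C. -/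
/-- `L` is a completion of `R`: `L ⊇ R` and `L` has exactly one cell in every file
(the triple representation of a Latin square of order n, consisting of n² cells). -/
def IsCompletion (n : ℕ) (R L : Set (Cell n)) : Prop :=
  R ⊆ L ∧ ∀ (d : Fin 3) (u v : Fin n), ∃! x, x ∈ L ∧ x ∈ fileCells n d u v
/-- The cells of a connected component `C` of the dot graph of `D`. -/
def componentCells (n : ℕ) (D : Set (Cell n)) (C : (dotGraph n D).ConnectedComponent) :
    Set (Cell n) :=
  {x | ∃ h : x ∈ D, (dotGraph n D).connectedComponentMk ⟨x, h⟩ = C}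

/-- BUG condition: Let R be non-attacking rooks and D a disjoint dot set
such that no file contains both a rook and a dot, every rook-free file contains exactly
two dots, and D is a complete candidate set for R (every completion L of R satisfies
L ∖ R ⊆ D).  If R has a completion, then every connected component C of the dot graph is
solvable: some S ⊆ C contains exactly one of the two dots of every file meeting C. -/
theorem bug_condition_necessary (n : ℕ) (R D : Set (Cell n))
    (hR : NonAttacking n R) (hdisj : Disjoint R D)
    (hsep : ∀ (d : Fin 3) (u v : Fin n),
      ¬((R ∩ fileCells n d u v).Nonempty ∧ (D ∩ fileCells n d u v).Nonempty))
    (htwo : ∀ (d : Fin 3) (u v : Fin n),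
      R ∩ fileCells n d u v = ∅ → (D ∩ fileCells n d u v).ncard = 2)
    (hcand : ∀ L, IsCompletion n R L → L \ R ⊆ D)
    (hcomp : ∃ L, IsCompletion n R L) :
    ∀ C : (dotGraph n D).ConnectedComponent,
      ∃ S : Set (Cell n), S ⊆ componentCells n D C ∧
        ∀ (d : Fin 3) (u v : Fin n),
          (componentCells n D C ∩ fileCells n d u v).Nonempty →
          ∃! x, x ∈ S ∧ x ∈ fileCells n d u v := by
  obtain ⟨L, hL⟩ := hcomp
  intro C
  refine ⟨(L \ R) ∩ componentCells n D C, Set.inter_subset_right, ?_⟩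
  rintro d u v ⟨y, ⟨hyD, hyMk⟩, hyf⟩
  obtain ⟨x, ⟨hxL, hxf⟩, hxu⟩ := hL.2 d u v
  have hxR : x ∉ R := fun hxR => hsep d u v ⟨⟨x, hxR, hxf⟩, ⟨y, hyD, hyf⟩⟩
  have hxD : x ∈ D := hcand L hL ⟨hxL, hxR⟩
  have hxC : x ∈ componentCells n D C := by
    refine ⟨hxD, ?_⟩
    by_cases hxy : (⟨x, hxD⟩ : D) = ⟨y, hyD⟩
    · rw [hxy]; exact hyMk
    · rw [← hyMk]
      apply SimpleGraph.ConnectedComponent.sound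
      refine SimpleGraph.Adj.reachable ?_
      rw [dotGraph, SimpleGraph.fromRel_adj]
      exact ⟨hxy, Or.inl ⟨d, u, v, hxf, hyf⟩⟩
  refine ⟨x, ⟨⟨⟨hxL, hxR⟩, hxC⟩, hxf⟩, ?_⟩
  rintro x' ⟨⟨⟨hx'L, _⟩, _⟩, hx'f⟩
  exact hxu x' ⟨hx'L, hx'f⟩
end
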